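/- If l₁ ≥ 2d, l₂ ≤ n − 2d, and n − 2d < l₁ + l₂ ≤ n, then depending on the initial state the two-contour system either reaches the collapse state (d, d) or reaches a limit cycle of period l₁ + l₂ + 2d on which both clusters have average velocity v = n/(l₁ + l₂ + 2d); in particular the states (l₁+d, 0) and (0, l₂+d) lie on this cycle, and (l₁, d), (d, l₂) feed into it. -/
import Mathlib


open scoped Classical

namespace TwoContour

/-- A state of the two-contour system: the cells of the front particles
of cluster 1 and cluster 2. -/
abbrev State (n : ℕ) := ZMod n × ZMod n

/-- Cell `c` is occupied by a cluster of length `l` whose front particle is at cell `α`: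
the cluster occupies cells `α, α-1, …, α-(l-1)` (mod `n`). -/
def occ (n : ℕ) (α : ZMod n) (l : ℕ) (c : ZMod n) : Prop :=
  ∃ k : ℕ, k < l ∧ c = α - (k : ZMod n)

/-- Cluster 1 is delayed: its front stands at node 1 (cell 0 of contour 1) while
cluster 2 occupies node 1 (cells `d`, `d+1` of contour 2) or stands at node 1
(competition at node 1 is resolved in favor of cluster 2); or its front stands at
node 2 (cell `d` of contour 1) while cluster 2 occupies node 2 (cells 0, 1 of contour 2). -/
def blocked1 (n l1 l2 d : ℕ) (s : State n) : Prop :=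
  (s.1 = 0 ∧ ((occ n s.2 l2 (d : ZMod n) ∧ occ n s.2 l2 ((d : ZMod n) + 1)) ∨ s.2 = (d : ZMod n)))
  ∨ (s.1 = (d : ZMod n) ∧ occ n s.2 l2 0 ∧ occ n s.2 l2 1)

/-- Cluster 2 is delayed: its front stands at node 2 (cell 0 of contour 2) while
cluster 1 occupies node 2 (cells `d`, `d+1` of contour 1) or stands at node 2
(competition at node 2 is resolved in favor of cluster 1); or its front stands at
node 1 (cell `d` of contour 2) while cluster 1 occupies node 1 (cells 0, 1 of contour 1). -/
def blocked2 (n l1 l2 d : ℕ) (s : State n) : Prop :=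
  (s.2 = 0 ∧ ((occ n s.1 l1 (d : ZMod n) ∧ occ n s.1 l1 ((d : ZMod n) + 1)) ∨ s.1 = (d : ZMod n)))
  ∨ (s.2 = (d : ZMod n) ∧ occ n s.1 l1 0 ∧ occ n s.1 l1 1)

/-- One time step of the deterministic dynamics: each non-delayed cluster advances one cell. -/
noncomputable def step (n l1 l2 d : ℕ) (s : State n) : State n :=
  (if blocked1 n l1 l2 d s then s.1 else s.1 + 1,
   if blocked2 n l1 l2 d s then s.2 else s.2 + 1)

/-- A state of free motion: from this state on, neither cluster is ever delayed. -/
def FreeState (n l1 l2 d : ℕ) (s : State n) : Prop :=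
  ∀ t : ℕ, ¬ blocked1 n l1 l2 d ((step n l1 l2 d)^[t] s) ∧
           ¬ blocked2 n l1 l2 d ((step n l1 l2 d)^[t] s)

/-- A state of collapse: from this state on, no particle of either cluster ever moves. -/
def CollapseState (n l1 l2 d : ℕ) (s : State n) : Prop :=
  ∀ t : ℕ, blocked1 n l1 l2 d ((step n l1 l2 d)^[t] s) ∧
           blocked2 n l1 l2 d ((step n l1 l2 d)^[t] s)

/-- `s` lies on a limit cycle of period `T`. -/
def Periodic (n l1 l2 d : ℕ) (s : State n) (T : ℕ) : Prop :=
  0 < T ∧ (step n l1 l2 d)^[T] s = s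

/-- Number of moves of cluster 1 during the first `T` steps starting from `s`. -/
noncomputable def moves1 (n l1 l2 d : ℕ) (s : State n) (T : ℕ) : ℕ :=
  ((Finset.range T).filter (fun t => ¬ blocked1 n l1 l2 d ((step n l1 l2 d)^[t] s))).card

/-- Number of moves of cluster 2 during the first `T` steps starting from `s`. -/
noncomputable def moves2 (n l1 l2 d : ℕ) (s : State n) (T : ℕ) : ℕ :=
  ((Finset.range T).filter (fun t => ¬ blocked2 n l1 l2 d ((step n l1 l2 d)^[t] s))).card

/-- An admissible state: the two clusters do not occupy the same node simultaneously. -/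
def Admissible (n l1 l2 d : ℕ) (s : State n) : Prop :=
  ¬ (occ n s.1 l1 0 ∧ occ n s.1 l1 1 ∧
     occ n s.2 l2 (d : ZMod n) ∧ occ n s.2 l2 ((d : ZMod n) + 1)) ∧
  ¬ (occ n s.1 l1 (d : ZMod n) ∧ occ n s.1 l1 ((d : ZMod n) + 1) ∧
     occ n s.2 l2 0 ∧ occ n s.2 l2 1)


section Kit
variable {n : ℕ}

lemma mod3 (hn : 0 < n) {a : ℕ} (h : a < 3 * n) :
    (a < n ∧ a % n = a) ∨ (n ≤ a ∧ a < 2*n ∧ a % n = a - n) ∨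
    (2*n ≤ a ∧ a % n = a - 2*n) := by
  rcases Nat.lt_or_ge a n with h1 | h1
  · exact Or.inl ⟨h1, Nat.mod_eq_of_lt h1⟩
  rcases Nat.lt_or_ge a (2*n) with h2 | h2
  · refine Or.inr (Or.inl ⟨h1, h2, ?_⟩)
    rw [Nat.mod_eq_sub_mod h1, Nat.mod_eq_of_lt (by omega)]
  · refine Or.inr (Or.inr ⟨h2, ?_⟩)
    rw [Nat.mod_eq_sub_mod (by omega), Nat.mod_eq_sub_mod (by omega),
      Nat.mod_eq_of_lt (by omega)]
    omega

/-- key val-of-difference lemma -/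
lemma val_sub_cast (hn : 0 < n) (x : ZMod n) (v : ℕ) (hv : v ≤ n) :
    (x - (v : ZMod n)).val = (x.val + n - v) % n := by
  haveI : NeZero n := ⟨hn.ne'⟩
  have hx : x - (v : ZMod n) = ((x.val + n - v : ℕ) : ZMod n) := by
    have h1 : ((x.val + n - v : ℕ) : ZMod n) = ((x.val + n : ℕ) : ZMod n) - (v : ZMod n) := by
      rw [Nat.cast_sub (by omega)]
    rw [h1]
    push_cast
    rw [ZMod.natCast_zmod_val, ZMod.natCast_self]
    ring
  rw [hx, ZMod.val_natCast]

lemma val_add_one (hn : 0 < n) (x : ZMod n) (h : x.val + 1 < n) : (x + 1).val = x.val + 1 := by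
  haveI : NeZero n := ⟨hn.ne'⟩
  have : x + 1 = ((x.val + 1 : ℕ) : ZMod n) := by
    push_cast [ZMod.natCast_zmod_val]
    rfl
  rw [this, ZMod.val_cast_of_lt h]


lemma cast_add_one (u : ℕ) : ((u : ℕ) : ZMod n) + 1 = ((u + 1 : ℕ) : ZMod n) := by
  push_cast; ring

lemma eq_cast_iff (hn : 0 < n) (x : ZMod n) (v : ℕ) (hv : v < n) : x = (v : ZMod n) ↔ x.val = v := by
  haveI : NeZero n := ⟨hn.ne'⟩
  constructor
  · rintro rfl; exact ZMod.val_cast_of_lt hv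
  · intro h; rw [← h, ZMod.natCast_zmod_val]

lemma occ_iff (hn : 0 < n) {l : ℕ} (hl : l ≤ n) (b c : ZMod n) :
    occ n b l c ↔ (b - c).val < l := by
  haveI : NeZero n := ⟨hn.ne'⟩
  constructor
  · rintro ⟨k, hk, rfl⟩
    have : b - (b - (k : ZMod n)) = (k : ZMod n) := by ring
    rw [this, ZMod.val_cast_of_lt (by omega)]
    exact hk
  · intro h
    exact ⟨(b - c).val, h, by rw [ZMod.natCast_zmod_val]; ring⟩

end Kit

section NF
variable {n l1 l2 d : ℕ}

lemma blocked1_iff (hn : 0 < n) (hd : 0 < d) (hdn : d < n) (hl2 : 0 < l2) (hl2n : l2 < n)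
    (s : State n) :
    blocked1 n l1 l2 d s ↔
      (s.1 = 0 ∧ (s.2 - (d : ZMod n)).val < l2) ∨
      (s.1 = (d : ZMod n) ∧ (s.2 - 1).val < l2 - 1) := by
  haveI : NeZero n := ⟨hn.ne'⟩
  have o1 := occ_iff hn hl2n.le s.2 ((d : ℕ) : ZMod n)
  have o2 := occ_iff hn hl2n.le s.2 ((d : ZMod n) + 1)
  have o3 := occ_iff hn hl2n.le s.2 (0 : ZMod n)
  have o4 := occ_iff hn hl2n.le s.2 (1 : ZMod n)
  rw [blocked1, o1, o2, o3, o4]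
  have e1 : s.2 - ((d : ZMod n) + 1) = (s.2 - (d : ZMod n)) - ((1 : ℕ) : ZMod n) := by
    push_cast; ring
  have e0 : s.2 - (0 : ZMod n) = s.2 := by ring
  have e4 : s.2 - (1 : ZMod n) = s.2 - ((1:ℕ) : ZMod n) := by push_cast; ring
  have hv1 : ((s.2 - (d : ZMod n)) - ((1:ℕ) : ZMod n)).val = ((s.2 - (d:ZMod n)).val + n - 1) % n :=
    val_sub_cast hn _ 1 (by omega)
  have hv2 : (s.2 - ((1:ℕ) : ZMod n)).val = (s.2.val + n - 1) % n := val_sub_cast hn _ 1 (by omega)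
  have hbd : s.2 = (d : ZMod n) ↔ (s.2 - (d : ZMod n)).val = 0 := by
    rw [ZMod.val_eq_zero, sub_eq_zero]
  have hm := ZMod.val_lt (s.2 - (d : ZMod n))
  have hm2 := ZMod.val_lt s.2
  rw [e1, e0, e4, hv1, hv2, hbd]
  rcases mod3 hn (show (s.2 - (d:ZMod n)).val + n - 1 < 3*n by omega) with ⟨h, h'⟩ | ⟨h, h', h''⟩ | ⟨h, h'⟩ <;>
    rcases mod3 hn (show s.2.val + n - 1 < 3*n by omega) with ⟨g, g'⟩ | ⟨g, g', g''⟩ | ⟨g, g'⟩ <;>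
      constructor <;> rintro (⟨u, v⟩ | ⟨u, v⟩) <;>
        first
        | exact Or.inl ⟨u, by omega⟩
        | exact Or.inr ⟨u, by omega⟩


lemma blocked2_iff (hn : 0 < n) (hd : 0 < d) (hdn : d < n) (hl1 : 0 < l1) (hl1n : l1 < n)
    (s : State n) :
    blocked2 n l1 l2 d s ↔
      (s.2 = 0 ∧ (s.1 - (d : ZMod n)).val < l1) ∨
      (s.2 = (d : ZMod n) ∧ (s.1 - 1).val < l1 - 1) := by
  haveI : NeZero n := ⟨hn.ne'⟩
  have o1 := occ_iff hn hl1n.le s.1 ((d : ℕ) : ZMod n)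
  have o2 := occ_iff hn hl1n.le s.1 ((d : ZMod n) + 1)
  have o3 := occ_iff hn hl1n.le s.1 (0 : ZMod n)
  have o4 := occ_iff hn hl1n.le s.1 (1 : ZMod n)
  rw [blocked2, o1, o2, o3, o4]
  have e1 : s.1 - ((d : ZMod n) + 1) = (s.1 - (d : ZMod n)) - ((1 : ℕ) : ZMod n) := by
    push_cast; ring
  have e0 : s.1 - (0 : ZMod n) = s.1 := by ring
  have e4 : s.1 - (1 : ZMod n) = s.1 - ((1:ℕ) : ZMod n) := by push_cast; ring
  have hv1 : ((s.1 - (d : ZMod n)) - ((1:ℕ) : ZMod n)).val = ((s.1 - (d:ZMod n)).val + n - 1) % n :=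
    val_sub_cast hn _ 1 (by omega)
  have hv2 : (s.1 - ((1:ℕ) : ZMod n)).val = (s.1.val + n - 1) % n := val_sub_cast hn _ 1 (by omega)
  have hbd : s.1 = (d : ZMod n) ↔ (s.1 - (d : ZMod n)).val = 0 := by
    rw [ZMod.val_eq_zero, sub_eq_zero]
  have hm := ZMod.val_lt (s.1 - (d : ZMod n))
  have hm2 := ZMod.val_lt s.1
  rw [e1, e0, e4, hv1, hv2, hbd]
  rcases mod3 hn (show (s.1 - (d:ZMod n)).val + n - 1 < 3*n by omega) with ⟨h, h'⟩ | ⟨h, h', h''⟩ | ⟨h, h'⟩ <;>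
    rcases mod3 hn (show s.1.val + n - 1 < 3*n by omega) with ⟨g, g'⟩ | ⟨g, g', g''⟩ | ⟨g, g'⟩ <;>
      constructor <;> rintro (⟨u, v⟩ | ⟨u, v⟩) <;>
        first
        | exact Or.inl ⟨u, by omega⟩
        | exact Or.inr ⟨u, by omega⟩

end NF

section Main
variable {n l1 l2 d : ℕ}

def Hyp (n l1 l2 d : ℕ) : Prop :=
  0 < d ∧ 2*d ≤ l1 ∧ l1 ≤ l2 ∧ l2 + 2*d ≤ n ∧ n < l1 + l2 + 2*d ∧ l1 + l2 ≤ n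

lemma step_ff {s : State n} (u : ¬ blocked1 n l1 l2 d s) (v : ¬ blocked2 n l1 l2 d s) :
    step n l1 l2 d s = (s.1 + 1, s.2 + 1) := by simp [step, u, v]

lemma step_bf {s : State n} (u : blocked1 n l1 l2 d s) (v : ¬ blocked2 n l1 l2 d s) :
    step n l1 l2 d s = (s.1, s.2 + 1) := by simp [step, u, v]

lemma step_fb {s : State n} (u : ¬ blocked1 n l1 l2 d s) (v : blocked2 n l1 l2 d s) :
    step n l1 l2 d s = (s.1 + 1, s.2) := by simp [step, u, v]

lemma step_bb {s : State n} (u : blocked1 n l1 l2 d s) (v : blocked2 n l1 l2 d s) :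
    step n l1 l2 d s = s := by simp [step, u, v]

lemma cast_inj' (hn : 0 < n) {u v : ℕ} (hu : u < n) (hv : v < n) :
    ((u:ℕ) : ZMod n) = ((v:ℕ) : ZMod n) ↔ u = v := by
  haveI : NeZero n := ⟨hn.ne'⟩
  constructor
  · intro h
    have := congrArg ZMod.val h
    rwa [ZMod.val_cast_of_lt hu, ZMod.val_cast_of_lt hv] at this
  · rintro rfl; rfl

lemma cast_eq_zero' (hn : 0 < n) {u : ℕ} (hu : u < n) : ((u:ℕ) : ZMod n) = 0 ↔ u = 0 := by
  rw [← Nat.cast_zero]; exact cast_inj' hn hu hn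

lemma cast_reduce (hn : 0 < n) {u : ℕ} (h : n ≤ u) :
    ((u : ℕ) : ZMod n) = ((u - n : ℕ) : ZMod n) := by
  rw [Nat.cast_sub h, ZMod.natCast_self, sub_zero]

lemma val_cc (hn : 0 < n) {u : ℕ} (v : ℕ) (hu : u < n) (hv : v ≤ n) :
    (((u:ℕ) : ZMod n) - ((v:ℕ) : ZMod n)).val = (u + n - v) % n := by
  rw [val_sub_cast hn _ v hv, ZMod.val_cast_of_lt hu]

lemma val_sub_one' (hn : 0 < n) (x : ZMod n) : (x - 1).val = (x.val + n - 1) % n := by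
  have h : x - 1 = x - ((1:ℕ) : ZMod n) := by push_cast; rfl
  rw [h, val_sub_cast hn x 1 (by omega)]

/-- W1: cluster 1 waiting at node 1 (cell 0); cluster 2 passes, ending at (0, l2+d). -/
lemma wait1 (H : Hyp n l1 l2 d) : ∀ (j : ℕ) (b : ZMod n), (b - (d:ZMod n)).val + j = l2 →
    (step n l1 l2 d)^[j] ((0 : ZMod n), b) = ((0 : ZMod n), ((l2 + d : ℕ) : ZMod n)) := by
  obtain ⟨hd, h1, h12, h2, h3, h4⟩ := H
  have hn : 0 < n := by omega
  haveI : NeZero n := ⟨hn.ne'⟩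
  intro j
  induction j with
  | zero =>
    intro b hb
    simp only [Function.iterate_zero, id_eq]
    have hbd : b - (d:ZMod n) = ((l2:ℕ) : ZMod n) := by
      rw [eq_cast_iff hn _ l2 (by omega)]; omega
    have hb' : b = ((l2 + d : ℕ) : ZMod n) := by
      have h' := sub_eq_iff_eq_add.mp hbd
      rw [h']; push_cast; ring
    rw [hb']
  | succ j ih =>
    intro b hb
    have hval : (b - (d:ZMod n)).val < l2 := by omega
    have hb1 : blocked1 n l1 l2 d ((0 : ZMod n), b) := by
      rw [blocked1_iff hn hd (by omega) (by omega) (by omega)]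
      exact Or.inl ⟨rfl, hval⟩
    have hb2 : ¬ blocked2 n l1 l2 d ((0 : ZMod n), b) := by
      rw [blocked2_iff hn hd (by omega) (by omega) (by omega)]
      rintro (⟨u, v⟩ | ⟨u, v⟩)
      · have u' : b = (0 : ZMod n) := u
        rw [u'] at hval
        have : ((0 : ZMod n) - (d : ZMod n)).val = (0 + n - d) % n := by
          rw [← Nat.cast_zero]; exact val_cc hn d hn (by omega)
        rw [this, Nat.mod_eq_of_lt (by omega)] at hval
        omega
      · have v' : (((0:ZMod n), b).1 - 1).val = (0 + n - 1) % n := by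
          rw [val_sub_one' hn]
          norm_num
        rw [v', Nat.mod_eq_of_lt (by omega)] at v
        omega
    rw [Function.iterate_succ_apply, step_bf hb1 hb2]
    apply ih
    have e : b + 1 - (d : ZMod n) = (b - (d:ZMod n)) + 1 := by ring
    have : (((0:ZMod n), b).2 + 1 - (d:ZMod n)).val = (b - (d:ZMod n)).val + 1 := by
      show (b + 1 - (d:ZMod n)).val = _
      rw [e, val_add_one hn _ (by omega)]
    rw [this]
    omega


/-- W2: cluster 2 waiting at node 2 (cell 0); cluster 1 passes, ending at (l1+d, 0). -/
lemma wait2 (H : Hyp n l1 l2 d) : ∀ (j : ℕ) (a : ZMod n), (a - (d:ZMod n)).val + j = l1 →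
    (step n l1 l2 d)^[j] (a, (0 : ZMod n)) = (((l1 + d : ℕ) : ZMod n), (0 : ZMod n)) := by
  obtain ⟨hd, h1, h12, h2, h3, h4⟩ := H
  have hn : 0 < n := by omega
  haveI : NeZero n := ⟨hn.ne'⟩
  intro j
  induction j with
  | zero =>
    intro a ha
    simp only [Function.iterate_zero, id_eq]
    have had : a - (d:ZMod n) = ((l1:ℕ) : ZMod n) := by
      rw [eq_cast_iff hn _ l1 (by omega)]; omega
    have ha' : a = ((l1 + d : ℕ) : ZMod n) := by
      have h' := sub_eq_iff_eq_add.mp had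
      rw [h']; push_cast; ring
    rw [ha']
  | succ j ih =>
    intro a ha
    have hval : (a - (d:ZMod n)).val < l1 := by omega
    have hb2 : blocked2 n l1 l2 d (a, (0 : ZMod n)) := by
      rw [blocked2_iff hn hd (by omega) (by omega) (by omega)]
      exact Or.inl ⟨rfl, hval⟩
    have hb1 : ¬ blocked1 n l1 l2 d (a, (0 : ZMod n)) := by
      rw [blocked1_iff hn hd (by omega) (by omega) (by omega)]
      rintro (⟨u, v⟩ | ⟨u, v⟩)
      · have u' : a = (0 : ZMod n) := u
        rw [u'] at hval
        have : ((0 : ZMod n) - (d : ZMod n)).val = (0 + n - d) % n := by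
          rw [← Nat.cast_zero]; exact val_cc hn d hn (by omega)
        rw [this, Nat.mod_eq_of_lt (by omega)] at hval
        omega
      · have v' : ((a, (0:ZMod n)).2 - 1).val = (0 + n - 1) % n := by
          rw [val_sub_one' hn]
          norm_num
        rw [v', Nat.mod_eq_of_lt (by omega)] at v
        omega
    rw [Function.iterate_succ_apply, step_fb hb1 hb2]
    apply ih
    have e : a + 1 - (d : ZMod n) = (a - (d:ZMod n)) + 1 := by ring
    have hv : ((a, (0:ZMod n)).1 + 1 - (d:ZMod n)).val = (a - (d:ZMod n)).val + 1 := by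
      show (a + 1 - (d:ZMod n)).val = _
      rw [e, val_add_one hn _ (by omega)]
    rw [hv]
    omega

/-- W3: cluster 1 waiting at node 2 (cell d); ends in collapse (d,d) or at (d, l2). -/
lemma wait3 (H : Hyp n l1 l2 d) : ∀ (j : ℕ) (b : ZMod n), (b - 1).val + 1 + j = l2 →
    ∃ t : ℕ, (step n l1 l2 d)^[t] (((d:ℕ) : ZMod n), b) = (((d:ℕ) : ZMod n), ((d:ℕ) : ZMod n)) ∨
      (step n l1 l2 d)^[t] (((d:ℕ) : ZMod n), b) = (((d:ℕ) : ZMod n), ((l2:ℕ) : ZMod n)) := by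
  obtain ⟨hd, h1, h12, h2, h3, h4⟩ := H
  have hn : 0 < n := by omega
  haveI : NeZero n := ⟨hn.ne'⟩
  intro j
  induction j with
  | zero =>
    intro b hb
    refine ⟨0, Or.inr ?_⟩
    simp only [Function.iterate_zero, id_eq]
    have hb1 : b - 1 = ((l2 - 1 : ℕ) : ZMod n) := by
      rw [eq_cast_iff hn _ (l2-1) (by omega)]; omega
    have hb' : b = ((l2 : ℕ) : ZMod n) := by
      have h' := sub_eq_iff_eq_add.mp hb1
      rw [h', cast_add_one]
      rw [cast_inj' hn (by omega) (by omega)]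
      omega
    rw [hb']
  | succ j ih =>
    intro b hb
    by_cases hbd : b = ((d:ℕ) : ZMod n)
    · exact ⟨0, Or.inl (by rw [hbd]; rfl)⟩
    have hval : (b - 1).val < l2 - 1 := by omega
    have hb1 : blocked1 n l1 l2 d (((d:ℕ) : ZMod n), b) := by
      rw [blocked1_iff hn hd (by omega) (by omega) (by omega)]
      exact Or.inr ⟨rfl, hval⟩
    have hb2 : ¬ blocked2 n l1 l2 d (((d:ℕ) : ZMod n), b) := by
      rw [blocked2_iff hn hd (by omega) (by omega) (by omega)]
      rintro (⟨u, v⟩ | ⟨u, v⟩)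
      · have u' : b = (0 : ZMod n) := u
        rw [u', zero_sub] at hval
        have : ((-1 : ZMod n)).val = (0 + n - 1) % n := by
          rw [show (-1 : ZMod n) = 0 - 1 by ring, val_sub_one' hn]
          norm_num
        rw [this, Nat.mod_eq_of_lt (by omega)] at hval
        omega
      · exact hbd u
    have estep : step n l1 l2 d (((d:ℕ) : ZMod n), b) = (((d:ℕ) : ZMod n), b + 1) :=
      step_bf hb1 hb2
    have hv : (b + 1 - 1).val = (b - 1).val + 1 := by
      have e1 : b + 1 - 1 = (b - 1) + 1 := by ring
      rw [e1, val_add_one hn _ (by omega)]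
    obtain ⟨t, ht⟩ := ih (b + 1) (by omega)
    refine ⟨t + 1, ?_⟩
    rw [Function.iterate_succ_apply, estep]
    exact ht

/-- W4: cluster 2 waiting at node 1 (cell d); ends in collapse (d,d) or at (l1, d). -/
lemma wait4 (H : Hyp n l1 l2 d) : ∀ (j : ℕ) (a : ZMod n), (a - 1).val + 1 + j = l1 →
    ∃ t : ℕ, (step n l1 l2 d)^[t] (a, ((d:ℕ) : ZMod n)) = (((d:ℕ) : ZMod n), ((d:ℕ) : ZMod n)) ∨
      (step n l1 l2 d)^[t] (a, ((d:ℕ) : ZMod n)) = (((l1:ℕ) : ZMod n), ((d:ℕ) : ZMod n)) := by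
  obtain ⟨hd, h1, h12, h2, h3, h4⟩ := H
  have hn : 0 < n := by omega
  haveI : NeZero n := ⟨hn.ne'⟩
  intro j
  induction j with
  | zero =>
    intro a ha
    refine ⟨0, Or.inr ?_⟩
    simp only [Function.iterate_zero, id_eq]
    have ha1 : a - 1 = ((l1 - 1 : ℕ) : ZMod n) := by
      rw [eq_cast_iff hn _ (l1-1) (by omega)]; omega
    have ha' : a = ((l1 : ℕ) : ZMod n) := by
      have h' := sub_eq_iff_eq_add.mp ha1
      rw [h', cast_add_one]
      rw [cast_inj' hn (by omega) (by omega)]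
      omega
    rw [ha']
  | succ j ih =>
    intro a ha
    by_cases had : a = ((d:ℕ) : ZMod n)
    · exact ⟨0, Or.inl (by rw [had]; rfl)⟩
    have hval : (a - 1).val < l1 - 1 := by omega
    have hb2 : blocked2 n l1 l2 d (a, ((d:ℕ) : ZMod n)) := by
      rw [blocked2_iff hn hd (by omega) (by omega) (by omega)]
      exact Or.inr ⟨rfl, hval⟩
    have hb1 : ¬ blocked1 n l1 l2 d (a, ((d:ℕ) : ZMod n)) := by
      rw [blocked1_iff hn hd (by omega) (by omega) (by omega)]
      rintro (⟨u, v⟩ | ⟨u, v⟩)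
      · have u' : a = (0 : ZMod n) := u
        rw [u', zero_sub] at hval
        have : ((-1 : ZMod n)).val = (0 + n - 1) % n := by
          rw [show (-1 : ZMod n) = 0 - 1 by ring, val_sub_one' hn]
          norm_num
        rw [this, Nat.mod_eq_of_lt (by omega)] at hval
        omega
      · exact had u
    have estep : step n l1 l2 d (a, ((d:ℕ) : ZMod n)) = (a + 1, ((d:ℕ) : ZMod n)) :=
      step_fb hb1 hb2
    have hv : (a + 1 - 1).val = (a - 1).val + 1 := by
      have e1 : a + 1 - 1 = (a - 1) + 1 := by ring
      rw [e1, val_add_one hn _ (by omega)]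
    obtain ⟨t, ht⟩ := ih (a + 1) (by omega)
    refine ⟨t + 1, ?_⟩
    rw [Function.iterate_succ_apply, estep]
    exact ht


/-- Position of cluster 1 along the limit cycle starting from (l1+d, 0). -/
def Fa (n l1 l2 d t : ℕ) : ZMod n :=
  if t < n - l1 - d then ((l1 + d + t : ℕ) : ZMod n)
  else if t ≤ l2 + d then 0 else ((t - (l2 + d) : ℕ) : ZMod n)

/-- Position of cluster 2 along the limit cycle starting from (l1+d, 0). -/
def Fb (n t : ℕ) : ZMod n := if t < n then ((t : ℕ) : ZMod n) else 0

/-- The limit cycle trajectory. -/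
def F (n l1 l2 d t : ℕ) : State n := (Fa n l1 l2 d t, Fb n t)

lemma Fa_low (H : Hyp n l1 l2 d) {t : ℕ} (h : t ≤ n - l1 - d) :
    Fa n l1 l2 d t = ((l1 + d + t : ℕ) : ZMod n) := by
  obtain ⟨hd, h1, h12, h2, h3, h4⟩ := H
  unfold Fa
  rcases lt_or_eq_of_le h with h' | h'
  · rw [if_pos h']
  · rw [if_neg (by omega), if_pos (by omega)]
    have e : l1 + d + t = n := by omega
    rw [e, ZMod.natCast_self]

lemma Fa_mid (H : Hyp n l1 l2 d) {t : ℕ} (h1 : n - l1 - d ≤ t) (h2 : t ≤ l2 + d) :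
    Fa n l1 l2 d t = 0 := by
  unfold Fa
  rw [if_neg (by omega), if_pos h2]

lemma Fa_high (H : Hyp n l1 l2 d) {t : ℕ} (h : l2 + d ≤ t) :
    Fa n l1 l2 d t = ((t - (l2 + d) : ℕ) : ZMod n) := by
  obtain ⟨hd, h1, h12, h2, h3, h4⟩ := H
  unfold Fa
  rcases lt_or_eq_of_le h with h' | h'
  · rw [if_neg (by omega), if_neg (by omega)]
  · rw [if_neg (by omega), if_pos (by omega), ← h']
    simp

lemma Fb_low {t : ℕ} (hn : 0 < n) (h : t ≤ n) : Fb n t = ((t : ℕ) : ZMod n) := by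
  unfold Fb
  rcases lt_or_eq_of_le h with h' | h'
  · rw [if_pos h']
  · rw [if_neg (by omega), h', ZMod.natCast_self]

lemma Fb_high {t : ℕ} (h : n ≤ t) : Fb n t = 0 := by
  unfold Fb; rw [if_neg (by omega)]

lemma orbit_step (H : Hyp n l1 l2 d) {t : ℕ} (ht : t < l1 + l2 + 2*d) :
    step n l1 l2 d (F n l1 l2 d t) = F n l1 l2 d (t+1) ∧
    (blocked1 n l1 l2 d (F n l1 l2 d t) ↔ (n - l1 - d ≤ t ∧ t < l2 + d)) ∧
    (blocked2 n l1 l2 d (F n l1 l2 d t) ↔ n ≤ t) := by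
  have H' := H
  obtain ⟨hd, h1, h12, h2, h3, h4⟩ := H'
  have hn : 0 < n := by omega
  haveI : NeZero n := ⟨hn.ne'⟩
  have hdn : d < n := by omega
  rcases lt_or_ge t (n - l1 - d) with hA | hA
  · -- Phase A : both move, a = l1+d+t, b = t
    have hF : F n l1 l2 d t = (((l1 + d + t : ℕ) : ZMod n), ((t : ℕ) : ZMod n)) := by
      unfold F; rw [Fa_low H hA.le, Fb_low hn (by omega)]
    have nb1 : ¬ blocked1 n l1 l2 d (F n l1 l2 d t) := by
      rw [hF, blocked1_iff hn hd hdn (by omega) (by omega)]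
      rintro (⟨u, v⟩ | ⟨u, v⟩)
      · have u' : l1 + d + t = 0 := (cast_eq_zero' hn (by omega)).mp u
        omega
      · have u' : l1 + d + t = d := (cast_inj' hn (by omega) hdn).mp u
        omega
    have nb2 : ¬ blocked2 n l1 l2 d (F n l1 l2 d t) := by
      rw [hF, blocked2_iff hn hd hdn (by omega) (by omega)]
      rintro (⟨u, v⟩ | ⟨u, v⟩)
      · have u' : t = 0 := (cast_eq_zero' hn (by omega)).mp u
        rw [val_cc hn d (by omega) (by omega)] at v
        rcases mod3 hn (show l1 + d + t + n - d < 3*n by omega) with ⟨g, g'⟩ | ⟨g, _, g'⟩ | ⟨g, g'⟩ <;>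
          omega
      · have u' : t = d := (cast_inj' hn (by omega) hdn).mp u
        rw [val_sub_one' hn, ZMod.val_cast_of_lt (show l1 + d + t < n by omega)] at v
        rcases mod3 hn (show l1 + d + t + n - 1 < 3*n by omega) with ⟨g, g'⟩ | ⟨g, _, g'⟩ | ⟨g, g'⟩ <;>
          omega
    refine ⟨?_, iff_of_false nb1 (by omega), iff_of_false nb2 (by omega)⟩
    rw [step_ff nb1 nb2, hF]
    have hF' : F n l1 l2 d (t+1) = (((l1 + d + (t+1) : ℕ) : ZMod n), ((t+1 : ℕ) : ZMod n)) := by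
      unfold F; rw [Fa_low H (by omega), Fb_low hn (by omega)]
    rw [hF']
    simp only [Prod.mk.injEq]
    constructor
    · push_cast; ring
    · rw [cast_add_one]
  rcases lt_or_ge t (l2 + d) with hB | hB
  · -- Phase B : cluster 1 waits at 0, b = t
    have hF : F n l1 l2 d t = ((0 : ZMod n), ((t : ℕ) : ZMod n)) := by
      unfold F; rw [Fa_mid H hA (by omega), Fb_low hn (by omega)]
    have ht1 : 1 ≤ n - l1 - d := by omega
    have b1 : blocked1 n l1 l2 d (F n l1 l2 d t) := by
      rw [hF, blocked1_iff hn hd hdn (by omega) (by omega)]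
      refine Or.inl ⟨rfl, ?_⟩
      rw [val_cc hn d (by omega) (by omega)]
      rcases mod3 hn (show t + n - d < 3*n by omega) with ⟨g, g'⟩ | ⟨g, _, g'⟩ | ⟨g, g'⟩ <;> omega
    have nb2 : ¬ blocked2 n l1 l2 d (F n l1 l2 d t) := by
      rw [hF, blocked2_iff hn hd hdn (by omega) (by omega)]
      rintro (⟨u, v⟩ | ⟨u, v⟩)
      · have u' : t = 0 := (cast_eq_zero' hn (by omega)).mp u
        omega
      · have v' : ((0 : ZMod n) - 1).val = (0 + n - 1) % n := by
          rw [val_sub_one' hn]; norm_num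
        have v'' : ((0 : ZMod n) - 1).val < l1 - 1 := v
        rw [v', Nat.mod_eq_of_lt (by omega)] at v''
        omega
    refine ⟨?_, iff_of_true b1 (by omega), iff_of_false nb2 (by omega)⟩
    rw [step_bf b1 nb2, hF]
    have hF' : F n l1 l2 d (t+1) = ((0 : ZMod n), ((t+1 : ℕ) : ZMod n)) := by
      unfold F; rw [Fa_mid H (by omega) (by omega), Fb_low hn (by omega)]
    rw [hF']
    simp only [Prod.mk.injEq]
    exact ⟨trivial, cast_add_one _⟩
  rcases lt_or_ge t n with hC | hC
  · -- Phase C : both move, a = t - (l2+d), b = t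
    have hF : F n l1 l2 d t = (((t - (l2 + d) : ℕ) : ZMod n), ((t : ℕ) : ZMod n)) := by
      unfold F; rw [Fa_high H hB, Fb_low hn (by omega)]
    have nb1 : ¬ blocked1 n l1 l2 d (F n l1 l2 d t) := by
      rw [hF, blocked1_iff hn hd hdn (by omega) (by omega)]
      rintro (⟨u, v⟩ | ⟨u, v⟩)
      · have u' : t - (l2 + d) = 0 := (cast_eq_zero' hn (by omega)).mp u
        rw [val_cc hn d (by omega) (by omega)] at v
        rcases mod3 hn (show t + n - d < 3*n by omega) with ⟨g, g'⟩ | ⟨g, _, g'⟩ | ⟨g, g'⟩ <;> omega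
      · have u' : t - (l2 + d) = d := (cast_inj' hn (by omega) hdn).mp u
        rw [val_sub_one' hn, ZMod.val_cast_of_lt (show t < n by omega)] at v
        rcases mod3 hn (show t + n - 1 < 3*n by omega) with ⟨g, g'⟩ | ⟨g, _, g'⟩ | ⟨g, g'⟩ <;> omega
    have nb2 : ¬ blocked2 n l1 l2 d (F n l1 l2 d t) := by
      rw [hF, blocked2_iff hn hd hdn (by omega) (by omega)]
      rintro (⟨u, v⟩ | ⟨u, v⟩)
      · have u' : t = 0 := (cast_eq_zero' hn (by omega)).mp u
        omega
      · have u' : t = d := (cast_inj' hn (by omega) hdn).mp u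
        omega
    refine ⟨?_, iff_of_false nb1 (by omega), iff_of_false nb2 (by omega)⟩
    rw [step_ff nb1 nb2, hF]
    have hF' : F n l1 l2 d (t+1) = (((t + 1 - (l2 + d) : ℕ) : ZMod n), ((t+1 : ℕ) : ZMod n)) := by
      unfold F; rw [Fa_high H (by omega), Fb_low hn (by omega)]
    rw [hF']
    simp only [Prod.mk.injEq]
    constructor
    · rw [cast_add_one]
      congr 1
      omega
    · rw [cast_add_one]
  · -- Phase D : cluster 2 waits at 0, a = t - (l2+d)
    have hF : F n l1 l2 d t = (((t - (l2 + d) : ℕ) : ZMod n), (0 : ZMod n)) := by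
      unfold F; rw [Fa_high H (by omega), Fb_high hC]
    have hta : t - (l2 + d) < n := by omega
    have b2 : blocked2 n l1 l2 d (F n l1 l2 d t) := by
      rw [hF, blocked2_iff hn hd hdn (by omega) (by omega)]
      refine Or.inl ⟨rfl, ?_⟩
      rw [val_cc hn d hta (by omega)]
      rcases mod3 hn (show t - (l2 + d) + n - d < 3*n by omega) with ⟨g, g'⟩ | ⟨g, _, g'⟩ | ⟨g, g'⟩ <;>
        omega
    have nb1 : ¬ blocked1 n l1 l2 d (F n l1 l2 d t) := by
      rw [hF, blocked1_iff hn hd hdn (by omega) (by omega)]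
      rintro (⟨u, v⟩ | ⟨u, v⟩)
      · have u' : t - (l2 + d) = 0 := (cast_eq_zero' hn hta).mp u
        omega
      · have v' : ((0 : ZMod n) - 1).val = (0 + n - 1) % n := by
          rw [val_sub_one' hn]; norm_num
        have v'' : ((0 : ZMod n) - 1).val < l2 - 1 := v
        rw [v', Nat.mod_eq_of_lt (by omega)] at v''
        omega
    refine ⟨?_, iff_of_false nb1 (by omega), iff_of_true b2 hC⟩
    rw [step_fb nb1 b2, hF]
    have hF' : F n l1 l2 d (t+1) = (((t + 1 - (l2 + d) : ℕ) : ZMod n), (0 : ZMod n)) := by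
      unfold F; rw [Fa_high H (by omega), Fb_high (by omega)]
    rw [hF']
    simp only [Prod.mk.injEq]
    constructor
    · rw [cast_add_one]
      congr 1
      omega
    · trivial

lemma orbit_eq (H : Hyp n l1 l2 d) : ∀ t ≤ l1 + l2 + 2*d,
    (step n l1 l2 d)^[t] (((l1 + d : ℕ) : ZMod n), (0 : ZMod n)) = F n l1 l2 d t := by
  have H' := H
  obtain ⟨hd, h1, h12, h2, h3, h4⟩ := H'
  have hn : 0 < n := by omega
  intro t
  induction t with
  | zero =>
    intro _
    simp only [Function.iterate_zero, id_eq]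
    unfold F
    rw [Fa_low H (by omega), Fb_low hn (by omega)]
    norm_num
  | succ t ih =>
    intro ht
    rw [Function.iterate_succ_apply', ih (by omega)]
    exact (orbit_step H (by omega)).1


lemma mod2 (hn : 0 < n) {a : ℕ} (h : a < 2 * n) :
    (a < n ∧ a % n = a) ∨ (n ≤ a ∧ a % n = a - n) := by
  rcases mod3 hn (show a < 3*n by omega) with ⟨g, g'⟩ | ⟨g, g'', g'⟩ | ⟨g, g'⟩
  · exact Or.inl ⟨g, g'⟩
  · exact Or.inr ⟨g, g'⟩
  · omega

lemma cast_mod (hn : 0 < n) (k : ℕ) : ((k : ℕ) : ZMod n) = ((k % n : ℕ) : ZMod n) := by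
  conv_lhs => rw [← Nat.div_add_mod k n]
  push_cast [ZMod.natCast_self]
  ring

/-- Free run from (d, l2): no delay for n - d steps. -/
lemma traj3 (H : Hyp n l1 l2 d) : ∀ t ≤ n - d,
    (step n l1 l2 d)^[t] (((d:ℕ) : ZMod n), ((l2:ℕ) : ZMod n)) =
      (((d + t : ℕ) : ZMod n), ((l2 + t : ℕ) : ZMod n)) := by
  have H' := H
  obtain ⟨hd, h1, h12, h2, h3, h4⟩ := H'
  have hn : 0 < n := by omega
  haveI : NeZero n := ⟨hn.ne'⟩
  have hdn : d < n := by omega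
  intro t
  induction t with
  | zero => intro _; simp
  | succ t ih =>
    intro ht
    have htn : t < n - d := by omega
    rw [Function.iterate_succ_apply', ih (by omega)]
    set sP : State n := (((d + t : ℕ) : ZMod n), ((l2 + t : ℕ) : ZMod n)) with hsP
    have hrep : ∃ u : ℕ, u < n ∧ ((l2 + t : ℕ) : ZMod n) = ((u : ℕ) : ZMod n) ∧
        (u = l2 + t ∨ (n ≤ l2 + t ∧ u = l2 + t - n)) := by
      rcases lt_or_ge (l2 + t) n with hc | hc
      · exact ⟨l2 + t, hc, rfl, Or.inl rfl⟩
      · exact ⟨l2 + t - n, by omega, cast_reduce hn hc, Or.inr ⟨hc, rfl⟩⟩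
    obtain ⟨u, hu, hcast, hucase⟩ := hrep
    have nb1 : ¬ blocked1 n l1 l2 d sP := by
      rw [hsP, blocked1_iff hn hd hdn (by omega) (by omega)]
      rintro (⟨uu, v⟩ | ⟨uu, v⟩)
      · have : d + t = 0 := (cast_eq_zero' hn (by omega)).mp uu
        omega
      · have ht0 : t = 0 := by
          have := (cast_inj' hn (by omega) hdn).mp uu
          omega
        rw [ht0] at v
        rw [val_sub_one' hn, ZMod.val_cast_of_lt (show l2 + 0 < n by omega)] at v
        rcases mod2 hn (show l2 + 0 + n - 1 < 2*n by omega) with ⟨g, g'⟩ | ⟨g, g'⟩ <;> omega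
    have nb2 : ¬ blocked2 n l1 l2 d sP := by
      rw [hsP, blocked2_iff hn hd hdn (by omega) (by omega)]
      rintro (⟨uu, v⟩ | ⟨uu, v⟩)
      · have hu0 : u = 0 := by
          have : ((u : ℕ) : ZMod n) = 0 := by rw [← hcast]; exact uu
          exact (cast_eq_zero' hn hu).mp this
        rw [val_cc hn d (by omega) (by omega)] at v
        rcases hucase with hc | ⟨hcn, hc⟩ <;>
          rcases mod2 hn (show d + t + n - d < 2*n by omega) with ⟨g, g'⟩ | ⟨g, g'⟩ <;> omega
      · have hud : u = d := by
          have : ((u : ℕ) : ZMod n) = ((d:ℕ) : ZMod n) := by rw [← hcast]; exact uu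
          exact (cast_inj' hn hu hdn).mp this
        rw [val_sub_one' hn, ZMod.val_cast_of_lt (show d + t < n by omega)] at v
        rcases hucase with hc | ⟨hcn, hc⟩ <;>
          rcases mod2 hn (show d + t + n - 1 < 2*n by omega) with ⟨g, g'⟩ | ⟨g, g'⟩ <;> omega
    rw [step_ff nb1 nb2, hsP]
    simp only [Prod.mk.injEq]
    constructor
    · push_cast; ring
    · push_cast; ring

/-- From (d, l2) the system reaches (0, l2 + d). -/
lemma reach3 (H : Hyp n l1 l2 d) : ∃ t : ℕ,
    (step n l1 l2 d)^[t] (((d:ℕ) : ZMod n), ((l2:ℕ) : ZMod n)) =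
      ((0 : ZMod n), ((l2 + d : ℕ) : ZMod n)) := by
  have H' := H
  obtain ⟨hd, h1, h12, h2, h3, h4⟩ := H'
  have hn : 0 < n := by omega
  haveI : NeZero n := ⟨hn.ne'⟩
  refine ⟨2*d + (n - d), ?_⟩
  rw [Function.iterate_add_apply, traj3 H (n-d) le_rfl]
  have e1 : ((d + (n - d) : ℕ) : ZMod n) = (0 : ZMod n) := by
    rw [show d + (n - d) = n by omega, ZMod.natCast_self]
  have e2 : ((l2 + (n - d) : ℕ) : ZMod n) = ((l2 - d : ℕ) : ZMod n) := by
    rw [cast_reduce hn (by omega)]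
    congr 1
    omega
  rw [e1, e2]
  apply wait1 H
  rw [val_cc hn d (by omega) (by omega)]
  rcases mod2 hn (show l2 - d + n - d < 2*n by omega) with ⟨g, g'⟩ | ⟨g, g'⟩ <;> omega

/-- Free run from (l1, d): no delay for n - d steps. -/
lemma traj4 (H : Hyp n l1 l2 d) : ∀ t ≤ n - d,
    (step n l1 l2 d)^[t] (((l1:ℕ) : ZMod n), ((d:ℕ) : ZMod n)) =
      (((l1 + t : ℕ) : ZMod n), ((d + t : ℕ) : ZMod n)) := by
  have H' := H
  obtain ⟨hd, h1, h12, h2, h3, h4⟩ := H'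
  have hn : 0 < n := by omega
  haveI : NeZero n := ⟨hn.ne'⟩
  have hdn : d < n := by omega
  intro t
  induction t with
  | zero => intro _; simp
  | succ t ih =>
    intro ht
    have htn : t < n - d := by omega
    rw [Function.iterate_succ_apply', ih (by omega)]
    set sP : State n := (((l1 + t : ℕ) : ZMod n), ((d + t : ℕ) : ZMod n)) with hsP
    have hrep : ∃ u : ℕ, u < n ∧ ((l1 + t : ℕ) : ZMod n) = ((u : ℕ) : ZMod n) ∧
        (u = l1 + t ∨ (n ≤ l1 + t ∧ u = l1 + t - n)) := by
      rcases lt_or_ge (l1 + t) n with hc | hc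
      · exact ⟨l1 + t, hc, rfl, Or.inl rfl⟩
      · exact ⟨l1 + t - n, by omega, cast_reduce hn hc, Or.inr ⟨hc, rfl⟩⟩
    obtain ⟨u, hu, hcast, hucase⟩ := hrep
    have nb2 : ¬ blocked2 n l1 l2 d sP := by
      rw [hsP, blocked2_iff hn hd hdn (by omega) (by omega)]
      rintro (⟨uu, v⟩ | ⟨uu, v⟩)
      · have : d + t = 0 := (cast_eq_zero' hn (by omega)).mp uu
        omega
      · have ht0 : t = 0 := by
          have := (cast_inj' hn (by omega) hdn).mp uu
          omega
        rw [ht0] at v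
        have hve : ((l1 + 0 : ℕ) : ZMod n) = ((l1 : ℕ) : ZMod n) := by norm_num
        rw [hve, val_sub_one' hn, ZMod.val_cast_of_lt (show l1 < n by omega)] at v
        rcases mod2 hn (show l1 + n - 1 < 2*n by omega) with ⟨g, g'⟩ | ⟨g, g'⟩ <;> omega
    have nb1 : ¬ blocked1 n l1 l2 d sP := by
      rw [hsP, blocked1_iff hn hd hdn (by omega) (by omega)]
      rintro (⟨uu, v⟩ | ⟨uu, v⟩)
      · have hu0 : u = 0 := by
          have : ((u : ℕ) : ZMod n) = 0 := by rw [← hcast]; exact uu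
          exact (cast_eq_zero' hn hu).mp this
        rw [val_cc hn d (by omega) (by omega)] at v
        rcases hucase with hc | ⟨hcn, hc⟩ <;>
          rcases mod2 hn (show d + t + n - d < 2*n by omega) with ⟨g, g'⟩ | ⟨g, g'⟩ <;> omega
      · have hud : u = d := by
          have : ((u : ℕ) : ZMod n) = ((d:ℕ) : ZMod n) := by rw [← hcast]; exact uu
          exact (cast_inj' hn hu hdn).mp this
        rw [val_sub_one' hn, ZMod.val_cast_of_lt (show d + t < n by omega)] at v
        rcases hucase with hc | ⟨hcn, hc⟩ <;>
          rcases mod2 hn (show d + t + n - 1 < 2*n by omega) with ⟨g, g'⟩ | ⟨g, g'⟩ <;> omega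
    rw [step_ff nb1 nb2, hsP]
    simp only [Prod.mk.injEq]
    constructor
    · push_cast; ring
    · push_cast; ring

/-- From (l1, d) the system reaches (l1 + d, 0). -/
lemma reach4 (H : Hyp n l1 l2 d) : ∃ t : ℕ,
    (step n l1 l2 d)^[t] (((l1:ℕ) : ZMod n), ((d:ℕ) : ZMod n)) =
      (((l1 + d : ℕ) : ZMod n), (0 : ZMod n)) := by
  have H' := H
  obtain ⟨hd, h1, h12, h2, h3, h4⟩ := H'
  have hn : 0 < n := by omega
  haveI : NeZero n := ⟨hn.ne'⟩
  refine ⟨2*d + (n - d), ?_⟩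
  rw [Function.iterate_add_apply, traj4 H (n-d) le_rfl]
  have e1 : ((d + (n - d) : ℕ) : ZMod n) = (0 : ZMod n) := by
    rw [show d + (n - d) = n by omega, ZMod.natCast_self]
  have e2 : ((l1 + (n - d) : ℕ) : ZMod n) = ((l1 - d : ℕ) : ZMod n) := by
    rw [cast_reduce hn (by omega)]
    congr 1
    omega
  rw [e1, e2]
  apply wait2 H
  rw [val_cc hn d (by omega) (by omega)]
  rcases mod2 hn (show l1 - d + n - d < 2*n by omega) with ⟨g, g'⟩ | ⟨g, g'⟩ <;> omega


/-- Free motion forever is impossible: within 2n steps some cluster is delayed. -/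
lemma no_free (H : Hyp n l1 l2 d) (s : State n) :
    ∃ t : ℕ, t < 2*n ∧ (blocked1 n l1 l2 d ((step n l1 l2 d)^[t] s) ∨
      blocked2 n l1 l2 d ((step n l1 l2 d)^[t] s)) := by
  have H' := H
  obtain ⟨hd, h1, h12, h2, h3, h4⟩ := H'
  have hn : 0 < n := by omega
  haveI : NeZero n := ⟨hn.ne'⟩
  have hdn : d < n := by omega
  by_contra hcon
  push_neg at hcon
  set A := s.1.val with hAdef
  set B := s.2.val with hBdef
  have hA : A < n := ZMod.val_lt s.1
  have hB : B < n := ZMod.val_lt s.2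
  have lin : ∀ t, t ≤ 2*n → (step n l1 l2 d)^[t] s =
      (((A + t : ℕ) : ZMod n), ((B + t : ℕ) : ZMod n)) := by
    intro t
    induction t with
    | zero =>
      intro _
      simp only [Function.iterate_zero, id_eq, Nat.add_zero, hAdef, hBdef,
        ZMod.natCast_zmod_val]
    | succ t ih =>
      intro ht
      have hnb := hcon t (by omega)
      rw [ih (by omega)] at hnb
      rw [Function.iterate_succ_apply', ih (by omega)]
      rw [step_ff hnb.1 hnb.2]
      simp only [Prod.mk.injEq]
      constructor <;> (push_cast; ring)
  have hev : ∀ t, t < 2*n →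
      ¬ blocked1 n l1 l2 d (((A + t : ℕ) : ZMod n), ((B + t : ℕ) : ZMod n)) ∧
      ¬ blocked2 n l1 l2 d (((A + t : ℕ) : ZMod n), ((B + t : ℕ) : ZMod n)) := by
    intro t ht
    have := hcon t ht
    rw [lin t ht.le] at this
    exact this
  -- the four event facts
  set K := B + n - A with hK
  set L := A + n - B with hL
  have hK2 : K < 2*n := by omega
  have hL2 : L < 2*n := by omega
  -- event 1 : cluster 1 front at cell 0
  have F1 : (K % n + n - d) % n ≥ l2 := by
    have h' := (hev (n - A) (by omega)).1
    rw [blocked1_iff hn hd hdn (by omega) (by omega)] at h'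
    push_neg at h'
    have hz : ((A + (n - A) : ℕ) : ZMod n) = 0 := by
      rw [show A + (n - A) = n by omega, ZMod.natCast_self]
    have hb' : ((B + (n - A) : ℕ) : ZMod n) = ((K % n : ℕ) : ZMod n) := by
      rw [show B + (n - A) = K by omega, cast_mod hn]
    have := h'.1 hz
    rw [hb', val_cc hn d (Nat.mod_lt _ hn) (by omega)] at this
    omega
  -- event 2 : cluster 1 front at cell d
  have F2 : ((K % n + d) % n + n - 1) % n ≥ l2 - 1 := by
    have h' := (hev (n - A + d) (by omega)).1
    rw [blocked1_iff hn hd hdn (by omega) (by omega)] at h'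
    push_neg at h'
    have hz : ((A + (n - A + d) : ℕ) : ZMod n) = ((d : ℕ) : ZMod n) := by
      rw [show A + (n - A + d) = n + d by omega, cast_reduce hn (by omega)]
      congr 1
      omega
    have hb' : ((B + (n - A + d) : ℕ) : ZMod n) = (((K % n + d) % n : ℕ) : ZMod n) := by
      rw [show B + (n - A + d) = K + d by omega, ZMod.natCast_eq_natCast_iff]
      calc K + d ≡ K % n + d [MOD n] := (Nat.mod_modEq K n).symm.add_right d
        _ ≡ (K % n + d) % n [MOD n] := (Nat.mod_modEq _ n).symm
    have := h'.2 hz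
    rw [hb', val_sub_one' hn, ZMod.val_cast_of_lt (Nat.mod_lt _ hn)] at this
    omega
  -- event 3 : cluster 2 front at cell 0
  have F3 : (L % n + n - d) % n ≥ l1 := by
    have h' := (hev (n - B) (by omega)).2
    rw [blocked2_iff hn hd hdn (by omega) (by omega)] at h'
    push_neg at h'
    have hz : ((B + (n - B) : ℕ) : ZMod n) = 0 := by
      rw [show B + (n - B) = n by omega, ZMod.natCast_self]
    have hb' : ((A + (n - B) : ℕ) : ZMod n) = ((L % n : ℕ) : ZMod n) := by
      rw [show A + (n - B) = L by omega, cast_mod hn]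
    have := h'.1 hz
    rw [hb', val_cc hn d (Nat.mod_lt _ hn) (by omega)] at this
    omega
  -- event 4 : cluster 2 front at cell d
  have F4 : ((L % n + d) % n + n - 1) % n ≥ l1 - 1 := by
    have h' := (hev (n - B + d) (by omega)).2
    rw [blocked2_iff hn hd hdn (by omega) (by omega)] at h'
    push_neg at h'
    have hz : ((B + (n - B + d) : ℕ) : ZMod n) = ((d : ℕ) : ZMod n) := by
      rw [show B + (n - B + d) = n + d by omega, cast_reduce hn (by omega)]
      congr 1
      omega
    have hb' : ((A + (n - B + d) : ℕ) : ZMod n) = (((L % n + d) % n : ℕ) : ZMod n) := by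
      rw [show A + (n - B + d) = L + d by omega, ZMod.natCast_eq_natCast_iff]
      calc L + d ≡ L % n + d [MOD n] := (Nat.mod_modEq L n).symm.add_right d
        _ ≡ (L % n + d) % n [MOD n] := (Nat.mod_modEq _ n).symm
    have := h'.2 hz
    rw [hb', val_sub_one' hn, ZMod.val_cast_of_lt (Nat.mod_lt _ hn)] at this
    omega
  -- arithmetic contradiction
  set k := K % n with hkdef
  set l := L % n with hldef
  have hk : k < n := Nat.mod_lt _ hn
  have hl : l < n := Nat.mod_lt _ hn
  have hkl : k + l = 0 ∨ k + l = n := by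
    have hKL : K + L = 2*n := by omega
    rcases mod2 hn hK2 with ⟨gk, gk'⟩ | ⟨gk, gk'⟩ <;>
      rcases mod2 hn hL2 with ⟨gl, gl'⟩ | ⟨gl, gl'⟩ <;> omega
  have F1' : (k < d ∧ k + n - d ≥ l2) ∨ (d ≤ k ∧ k - d ≥ l2) := by
    rcases mod2 hn (show k + n - d < 2*n by omega) with ⟨g, g'⟩ | ⟨g, g'⟩ <;> omega
  have F3' : (l < d ∧ l + n - d ≥ l1) ∨ (d ≤ l ∧ l - d ≥ l1) := by
    rcases mod2 hn (show l + n - d < 2*n by omega) with ⟨g, g'⟩ | ⟨g, g'⟩ <;> omega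
  obtain ⟨c2, hc2n, hc2, G2⟩ : ∃ c2, c2 < n ∧ ((k + d < n ∧ c2 = k + d) ∨ (n ≤ k + d ∧ c2 = k + d - n)) ∧
      (c2 + n - 1) % n ≥ l2 - 1 := by
    refine ⟨(k + d) % n, Nat.mod_lt _ hn, ?_, F2⟩
    rcases mod2 hn (show k + d < 2*n by omega) with ⟨g, g'⟩ | ⟨g, g'⟩ <;> omega
  obtain ⟨c4, hc4n, hc4, G4⟩ : ∃ c4, c4 < n ∧ ((l + d < n ∧ c4 = l + d) ∨ (n ≤ l + d ∧ c4 = l + d - n)) ∧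
      (c4 + n - 1) % n ≥ l1 - 1 := by
    refine ⟨(l + d) % n, Nat.mod_lt _ hn, ?_, F4⟩
    rcases mod2 hn (show l + d < 2*n by omega) with ⟨g, g'⟩ | ⟨g, g'⟩ <;> omega
  have F2' : (1 ≤ c2 ∧ c2 - 1 ≥ l2 - 1) ∨ (c2 = 0 ∧ n - 1 ≥ l2 - 1) := by
    rcases mod2 hn (show c2 + n - 1 < 2*n by omega) with ⟨g, g'⟩ | ⟨g, g'⟩ <;> omega
  have F4' : (1 ≤ c4 ∧ c4 - 1 ≥ l1 - 1) ∨ (c4 = 0 ∧ n - 1 ≥ l1 - 1) := by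
    rcases mod2 hn (show c4 + n - 1 < 2*n by omega) with ⟨g, g'⟩ | ⟨g, g'⟩ <;> omega
  omega


/-- Every state is eventually captured by the collapse state or the limit cycle. -/
lemma capture (H : Hyp n l1 l2 d) (s : State n) :
    ∃ t : ℕ, (step n l1 l2 d)^[t] s = (((d:ℕ) : ZMod n), ((d:ℕ) : ZMod n)) ∨
      (step n l1 l2 d)^[t] s = ((0 : ZMod n), ((l2 + d : ℕ) : ZMod n)) ∨
      (step n l1 l2 d)^[t] s = (((l1 + d : ℕ) : ZMod n), (0 : ZMod n)) := by
  have H' := H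
  obtain ⟨hd, h1, h12, h2, h3, h4⟩ := H'
  have hn : 0 < n := by omega
  haveI : NeZero n := ⟨hn.ne'⟩
  have hdn : d < n := by omega
  obtain ⟨t0, ht0, hb⟩ := no_free H s
  set s' := (step n l1 l2 d)^[t0] s with hs'
  rcases hb with hb | hb
  · rw [blocked1_iff hn hd hdn (by omega) (by omega)] at hb
    rcases hb with ⟨u, v⟩ | ⟨u, v⟩
    · have hw := wait1 H (l2 - (s'.2 - (d : ZMod n)).val) s'.2 (by omega)
      refine ⟨(l2 - (s'.2 - (d : ZMod n)).val) + t0, Or.inr (Or.inl ?_)⟩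
      rw [Function.iterate_add_apply, ← hs',
        show s' = ((0 : ZMod n), s'.2) from by rw [← u]]
      exact hw
    · obtain ⟨t1, ht1⟩ := wait3 H (l2 - 1 - (s'.2 - 1).val) s'.2 (by omega)
      have hsd : s' = (((d:ℕ) : ZMod n), s'.2) := by rw [← u]
      rcases ht1 with ht1 | ht1
      · refine ⟨t1 + t0, Or.inl ?_⟩
        rw [Function.iterate_add_apply, ← hs', hsd]
        exact ht1
      · obtain ⟨t2, ht2⟩ := reach3 H
        refine ⟨t2 + t1 + t0, Or.inr (Or.inl ?_)⟩
        rw [Function.iterate_add_apply, ← hs', Function.iterate_add_apply, hsd, ht1]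
        exact ht2
  · rw [blocked2_iff hn hd hdn (by omega) (by omega)] at hb
    rcases hb with ⟨u, v⟩ | ⟨u, v⟩
    · have hw := wait2 H (l1 - (s'.1 - (d : ZMod n)).val) s'.1 (by omega)
      refine ⟨(l1 - (s'.1 - (d : ZMod n)).val) + t0, Or.inr (Or.inr ?_)⟩
      rw [Function.iterate_add_apply, ← hs',
        show s' = (s'.1, (0 : ZMod n)) from by rw [← u]]
      exact hw
    · obtain ⟨t1, ht1⟩ := wait4 H (l1 - 1 - (s'.1 - 1).val) s'.1 (by omega)
      have hsd : s' = (s'.1, ((d:ℕ) : ZMod n)) := by rw [← u]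
      rcases ht1 with ht1 | ht1
      · refine ⟨t1 + t0, Or.inl ?_⟩
        rw [Function.iterate_add_apply, ← hs', hsd]
        exact ht1
      · obtain ⟨t2, ht2⟩ := reach4 H
        refine ⟨t2 + t1 + t0, Or.inr (Or.inr ?_)⟩
        rw [Function.iterate_add_apply, ← hs', Function.iterate_add_apply, hsd, ht1]
        exact ht2

lemma collapse_blocked (H : Hyp n l1 l2 d) :
    blocked1 n l1 l2 d (((d:ℕ) : ZMod n), ((d:ℕ) : ZMod n)) ∧
    blocked2 n l1 l2 d (((d:ℕ) : ZMod n), ((d:ℕ) : ZMod n)) := by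
  have H' := H
  obtain ⟨hd, h1, h12, h2, h3, h4⟩ := H'
  have hn : 0 < n := by omega
  haveI : NeZero n := ⟨hn.ne'⟩
  have hdn : d < n := by omega
  have hv : (((d:ℕ) : ZMod n) - 1).val = d - 1 := by
    rw [val_sub_one' hn, ZMod.val_cast_of_lt hdn]
    rcases mod2 hn (show d + n - 1 < 2*n by omega) with ⟨g, g'⟩ | ⟨g, g'⟩ <;> omega
  constructor
  · rw [blocked1_iff hn hd hdn (by omega) (by omega)]
    exact Or.inr ⟨rfl, by rw [hv]; omega⟩
  · rw [blocked2_iff hn hd hdn (by omega) (by omega)]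
    exact Or.inr ⟨rfl, by rw [hv]; omega⟩

lemma collapse_iter (H : Hyp n l1 l2 d) (t : ℕ) :
    (step n l1 l2 d)^[t] (((d:ℕ) : ZMod n), ((d:ℕ) : ZMod n)) =
      (((d:ℕ) : ZMod n), ((d:ℕ) : ZMod n)) := by
  induction t with
  | zero => rfl
  | succ t ih =>
    rw [Function.iterate_succ_apply', ih, step_bb (collapse_blocked H).1 (collapse_blocked H).2]

lemma collapseState (H : Hyp n l1 l2 d) :
    CollapseState n l1 l2 d (((d:ℕ) : ZMod n), ((d:ℕ) : ZMod n)) := by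
  intro t
  rw [collapse_iter H t]
  exact collapse_blocked H

lemma F_top (H : Hyp n l1 l2 d) :
    F n l1 l2 d (l1 + l2 + 2*d) = (((l1 + d : ℕ) : ZMod n), (0 : ZMod n)) := by
  have H' := H
  obtain ⟨hd, h1, h12, h2, h3, h4⟩ := H'
  unfold F
  rw [Fa_high H (by omega), Fb_high (by omega)]
  simp only [Prod.mk.injEq]
  constructor
  · congr 1
    omega
  · trivial

lemma F_mid (H : Hyp n l1 l2 d) :
    F n l1 l2 d (l2 + d) = ((0 : ZMod n), ((l2 + d : ℕ) : ZMod n)) := by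
  have H' := H
  obtain ⟨hd, h1, h12, h2, h3, h4⟩ := H'
  have hn : 0 < n := by omega
  unfold F
  rw [Fa_mid H (by omega) (by omega), Fb_low hn (by omega)]

lemma periodic_cycle (H : Hyp n l1 l2 d) :
    Periodic n l1 l2 d (((l1 + d : ℕ) : ZMod n), (0 : ZMod n)) (l1 + l2 + 2*d) := by
  have H' := H
  obtain ⟨hd, h1, h12, h2, h3, h4⟩ := H'
  exact ⟨by omega, by rw [orbit_eq H _ le_rfl, F_top H]⟩

lemma moves1_eq (H : Hyp n l1 l2 d) :
    moves1 n l1 l2 d (((l1 + d : ℕ) : ZMod n), (0 : ZMod n)) (l1 + l2 + 2*d) = n := by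
  have H' := H
  obtain ⟨hd, h1, h12, h2, h3, h4⟩ := H'
  unfold moves1
  have hset : (Finset.range (l1 + l2 + 2*d)).filter
      (fun t => ¬ blocked1 n l1 l2 d
        ((step n l1 l2 d)^[t] (((l1 + d : ℕ) : ZMod n), (0 : ZMod n)))) =
      Finset.range (n - l1 - d) ∪ Finset.Ico (l2 + d) (l1 + l2 + 2*d) := by
    ext x
    simp only [Finset.mem_filter, Finset.mem_range, Finset.mem_union, Finset.mem_Ico]
    constructor
    · rintro ⟨hx, hnb⟩
      rw [orbit_eq H x hx.le, (orbit_step H hx).2.1] at hnb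
      omega
    · intro hx
      have hx' : x < l1 + l2 + 2*d := by omega
      refine ⟨hx', ?_⟩
      rw [orbit_eq H x hx'.le, (orbit_step H hx').2.1]
      omega
  rw [hset, Finset.card_union_of_disjoint]
  · rw [Finset.card_range, Nat.card_Ico]
    omega
  · rw [Finset.disjoint_left]
    intro a ha hb
    rw [Finset.mem_range] at ha
    rw [Finset.mem_Ico] at hb
    omega

lemma moves2_eq (H : Hyp n l1 l2 d) :
    moves2 n l1 l2 d (((l1 + d : ℕ) : ZMod n), (0 : ZMod n)) (l1 + l2 + 2*d) = n := by
  have H' := H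
  obtain ⟨hd, h1, h12, h2, h3, h4⟩ := H'
  unfold moves2
  have hset : (Finset.range (l1 + l2 + 2*d)).filter
      (fun t => ¬ blocked2 n l1 l2 d
        ((step n l1 l2 d)^[t] (((l1 + d : ℕ) : ZMod n), (0 : ZMod n)))) =
      Finset.range n := by
    ext x
    simp only [Finset.mem_filter, Finset.mem_range]
    constructor
    · rintro ⟨hx, hnb⟩
      rw [orbit_eq H x hx.le, (orbit_step H hx).2.2] at hnb
      omega
    · intro hx
      have hx' : x < l1 + l2 + 2*d := by omega
      refine ⟨hx', ?_⟩
      rw [orbit_eq H x hx'.le, (orbit_step H hx').2.2]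
      omega
  rw [hset, Finset.card_range]

lemma cycle_mid (H : Hyp n l1 l2 d) :
    (step n l1 l2 d)^[l2 + d] (((l1 + d : ℕ) : ZMod n), (0 : ZMod n)) =
      ((0 : ZMod n), ((l2 + d : ℕ) : ZMod n)) := by
  have H' := H
  obtain ⟨hd, h1, h12, h2, h3, h4⟩ := H'
  rw [orbit_eq H (l2 + d) (by omega), F_mid H]

/-- From (0, l2+d) (a point on the cycle) the cycle start (l1+d, 0) is reached. -/
lemma mid_to_start (H : Hyp n l1 l2 d) :
    (step n l1 l2 d)^[l1 + d] ((0 : ZMod n), ((l2 + d : ℕ) : ZMod n)) =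
      (((l1 + d : ℕ) : ZMod n), (0 : ZMod n)) := by
  have H' := H
  obtain ⟨hd, h1, h12, h2, h3, h4⟩ := H'
  have key := (periodic_cycle H).2
  rw [show l1 + l2 + 2*d = (l1 + d) + (l2 + d) by omega, Function.iterate_add_apply,
    cycle_mid H] at key
  exact key

end Main

theorem stmt16 (n l1 l2 d : ℕ) (hn : 0 < n) (hd : 0 < d) (h2d : 2 * d ≤ n)
    (hl1pos : 0 < l1) (hl1n : l1 < n) (hl2pos : 0 < l2) (hl2n : l2 < n) (h12 : l1 ≤ l2)
    (h1 : 2 * d ≤ l1) (h2 : l2 ≤ n - 2 * d) (h3 : n - 2 * d < l1 + l2) (h4 : l1 + l2 ≤ n) :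
    CollapseState n l1 l2 d (((d : ℕ) : ZMod n), ((d : ℕ) : ZMod n)) ∧
    Periodic n l1 l2 d (((l1 + d : ℕ) : ZMod n), (0 : ZMod n)) (l1 + l2 + 2 * d) ∧
    moves1 n l1 l2 d (((l1 + d : ℕ) : ZMod n), (0 : ZMod n)) (l1 + l2 + 2 * d) = n ∧
    moves2 n l1 l2 d (((l1 + d : ℕ) : ZMod n), (0 : ZMod n)) (l1 + l2 + 2 * d) = n ∧
    (∃ t : ℕ, (step n l1 l2 d)^[t] (((l1 + d : ℕ) : ZMod n), (0 : ZMod n)) =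
        ((0 : ZMod n), ((l2 + d : ℕ) : ZMod n))) ∧
    (∃ t : ℕ, (step n l1 l2 d)^[t] (((l1 : ℕ) : ZMod n), ((d : ℕ) : ZMod n)) =
        ((0 : ZMod n), ((l2 + d : ℕ) : ZMod n))) ∧
    (∃ t : ℕ, (step n l1 l2 d)^[t] (((d : ℕ) : ZMod n), ((l2 : ℕ) : ZMod n)) =
        (((l1 + d : ℕ) : ZMod n), (0 : ZMod n))) ∧
    (∀ s : State n, Admissible n l1 l2 d s →
      (∃ t0 : ℕ, (step n l1 l2 d)^[t0] s = (((d : ℕ) : ZMod n), ((d : ℕ) : ZMod n))) ∨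
      (∃ t0 t : ℕ, (step n l1 l2 d)^[t0] s =
        (step n l1 l2 d)^[t] (((l1 + d : ℕ) : ZMod n), (0 : ZMod n)))) := by
  have H : Hyp n l1 l2 d := ⟨hd, h1, h12, by omega, by omega, h4⟩
  refine ⟨collapseState H, periodic_cycle H, moves1_eq H, moves2_eq H, ?_, ?_, ?_, ?_⟩
  · exact ⟨l2 + d, cycle_mid H⟩
  · obtain ⟨t, ht⟩ := reach4 H
    exact ⟨(l2 + d) + t, by rw [Function.iterate_add_apply, ht, cycle_mid H]⟩
  · obtain ⟨t, ht⟩ := reach3 H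
    exact ⟨(l1 + d) + t, by rw [Function.iterate_add_apply, ht, mid_to_start H]⟩
  · intro s _
    obtain ⟨t0, hc⟩ := capture H s
    rcases hc with hc | hc | hc
    · exact Or.inl ⟨t0, hc⟩
    · exact Or.inr ⟨t0, l2 + d, by rw [hc, cycle_mid H]⟩
    · exact Or.inr ⟨t0, 0, by rw [hc]; rfl⟩

end TwoContour
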